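/- The arrangement B of 27 hyperplanes in 𝔽₁₁³ given by the normal vectors (0,0,1), (0,1,1), (0,1,2), (0,1,3), (0,1,4), (0,1,5), (0,1,6), (1,0,0), (1,0,1), (1,2,2), (1,3,1), (1,3,10), (1,4,3), (1,4,4), (1,5,7), (1,6,4), (1,6,6), (1,8,5), (1,8,8), (1,9,0), (1,9,1), (1,9,4), (1,9,5), (1,9,8), (1,9,9), (1,10,0), (1,10,5) has the same intersection lattice invariants as A: every hyperplane of B contains either 10 or 11 rank-2 intersection points, and the multiset of point multiplicities is {{2^15, 3^70, 7^6}}. -/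

import Mathlib

open Module Matrix
open scoped Classical

namespace Arrgt

variable {K : Type*} [Field K]

/-- A (central) hyperplane arrangement in `K^n`: a finite set of kernels of
nonzero linear forms. -/
structure Arrangement (K : Type*) [Field K] (n : ℕ) where
  hyperplanes : Finset (Submodule K (Fin n → K))
  isHyp : ∀ H ∈ hyperplanes, ∃ f : (Fin n → K) →ₗ[K] K, f ≠ 0 ∧ H = LinearMap.ker f

/-- The deletion `A \ {H}`. -/
noncomputable def Arrangement.delete {n : ℕ} (A : Arrangement K n) (H : Submodule K (Fin n → K)) :
    Arrangement K n :=
  ⟨A.hyperplanes.erase H, fun H' hH' => A.isHyp H' (Finset.mem_of_mem_erase hH')⟩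

/-- The empty arrangement of rank `n`. -/
def emptyArr (K : Type*) [Field K] (n : ℕ) : Arrangement K n := ⟨∅, by simp⟩

/-- The linear polynomial in `K[x_1,...,x_n]` attached to a linear form. -/
noncomputable def linPoly {n : ℕ} (f : (Fin n → K) →ₗ[K] K) : MvPolynomial (Fin n) K :=
  ∑ i, MvPolynomial.C (f (Pi.single i 1)) * MvPolynomial.X i

/-- `Q` is a defining polynomial of the arrangement `A`: a product of linear forms
whose kernels are exactly the hyperplanes of `A`. -/
def IsDefiningPoly {n : ℕ} (A : Arrangement K n) (Q : MvPolynomial (Fin n) K) : Prop :=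
  ∃ α : Submodule K (Fin n → K) → ((Fin n → K) →ₗ[K] K),
    (∀ H ∈ A.hyperplanes, α H ≠ 0 ∧ LinearMap.ker (α H) = H) ∧
    Q = ∏ H ∈ A.hyperplanes, linPoly (α H)

/-- Evaluation of a derivation at the polynomial `Q`, as a linear map. -/
noncomputable def evalDer {n : ℕ} (Q : MvPolynomial (Fin n) K) :
    Derivation K (MvPolynomial (Fin n) K) (MvPolynomial (Fin n) K) →ₗ[MvPolynomial (Fin n) K]
      MvPolynomial (Fin n) K where
  toFun θ := θ Q
  map_add' _ _ := rfl
  map_smul' _ _ := rfl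

/-- The module `D(A) = {θ : θ(Q) ∈ Q·S}` of `A`-derivations (for a chosen defining
polynomial `Q`). -/
noncomputable def DerModule {n : ℕ} (Q : MvPolynomial (Fin n) K) :
    Submodule (MvPolynomial (Fin n) K)
      (Derivation K (MvPolynomial (Fin n) K) (MvPolynomial (Fin n) K)) :=
  Submodule.comap (evalDer Q) (Ideal.span {Q})

/-- `A` is a free arrangement: `D(A)` is a free module over `S = K[x_1,...,x_n]`. -/
def IsFree {n : ℕ} (A : Arrangement K n) : Prop :=
  ∃ Q, IsDefiningPoly A Q ∧ Module.Free (MvPolynomial (Fin n) K) (DerModule Q)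

/-- A nonzero derivation is homogeneous of polynomial degree `p` if all its
coefficients are homogeneous of degree `p`. -/
def IsHomogeneousDer {n : ℕ}
    (θ : Derivation K (MvPolynomial (Fin n) K) (MvPolynomial (Fin n) K)) (p : ℕ) : Prop :=
  θ ≠ 0 ∧ ∀ i, (θ (MvPolynomial.X i)).IsHomogeneous p

/-- `A` is free with exponents the multiset `e`: `D(A)` has a homogeneous basis whose
polynomial degrees form the multiset `e`. -/
def HasExponents {n : ℕ} (A : Arrangement K n) (e : Multiset ℕ) : Prop :=
  ∃ Q, IsDefiningPoly A Q ∧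
    ∃ (l : List ℕ) (b : Basis (Fin l.length) (MvPolynomial (Fin n) K) (DerModule Q)),
      (l : Multiset ℕ) = e ∧ ∀ i : Fin l.length, IsHomogeneousDer ((b i : DerModule Q) :
        Derivation K (MvPolynomial (Fin n) K) (MvPolynomial (Fin n) K)) (l.get i)

/-- `B` is (a model, via a linear identification `H ≅ K^n`, of) the restriction `A^H`. -/
def IsRestriction {n : ℕ} (A : Arrangement K (n + 1)) (H : Submodule K (Fin (n + 1) → K))
    (B : Arrangement K n) : Prop :=
  ∃ e : H ≃ₗ[K] (Fin n → K),
    B.hyperplanes = (A.hyperplanes.erase H).image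
      (fun H' => Submodule.map (e : H →ₗ[K] (Fin n → K)) (H'.comap H.subtype))

variable (K) in
/-- The class of inductively free arrangements. -/
inductive InductivelyFree : {n : ℕ} → Arrangement K n → Prop
  | empty (n : ℕ) : InductivelyFree (emptyArr K n)
  | add {n : ℕ} (A : Arrangement K (n + 1)) (H : Submodule K (Fin (n + 1) → K))
      (hH : H ∈ A.hyperplanes) (B : Arrangement K n) (hB : IsRestriction A H B)
      (e' e'' : Multiset ℕ)
      (h1 : InductivelyFree (A.delete H)) (h2 : InductivelyFree B)
      (h3 : HasExponents (A.delete H) e') (h4 : HasExponents B e'')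
      (h5 : e'' ≤ e') : InductivelyFree A

variable (K) in
/-- The class of recursively free arrangements. -/
inductive RecursivelyFree : {n : ℕ} → Arrangement K n → Prop
  | empty (n : ℕ) : RecursivelyFree (emptyArr K n)
  | add {n : ℕ} (A : Arrangement K (n + 1)) (H : Submodule K (Fin (n + 1) → K))
      (hH : H ∈ A.hyperplanes) (B : Arrangement K n) (hB : IsRestriction A H B)
      (e' e'' : Multiset ℕ)
      (h1 : RecursivelyFree (A.delete H)) (h2 : RecursivelyFree B)
      (h3 : HasExponents (A.delete H) e') (h4 : HasExponents B e'')
      (h5 : e'' ≤ e') : RecursivelyFree A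
  | del {n : ℕ} (A : Arrangement K (n + 1)) (H : Submodule K (Fin (n + 1) → K))
      (hH : H ∈ A.hyperplanes) (B : Arrangement K n) (hB : IsRestriction A H B)
      (e e'' : Multiset ℕ)
      (h1 : RecursivelyFree A) (h2 : RecursivelyFree B)
      (h3 : HasExponents A e) (h4 : HasExponents B e'')
      (h5 : e'' ≤ e) : RecursivelyFree (A.delete H)

/-- The intersection lattice of a set of hyperplanes: all intersections of finite
subsets (including the ambient space `⊤` as the empty intersection). -/
def setLattice {n : ℕ} (𝓐 : Set (Submodule K (Fin n → K))) : Set (Submodule K (Fin n → K)) :=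
  {X | ∃ s : Finset (Submodule K (Fin n → K)), ↑s ⊆ 𝓐 ∧ X = s.inf id}

/-- The intersection lattice of an arrangement. -/
def Arrangement.lattice {n : ℕ} (A : Arrangement K n) : Set (Submodule K (Fin n → K)) :=
  setLattice (↑A.hyperplanes)

/-- The linear form `x ↦ ∑ v i * x i` attached to a normal vector `v`. -/
noncomputable def lf {n : ℕ} (v : Fin n → K) : (Fin n → K) →ₗ[K] K :=
  ∑ i, v i • LinearMap.proj i

lemma lf_single {n : ℕ} (v : Fin n → K) (j : Fin n) : lf v (Pi.single j 1) = v j := by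
  simp [lf, Pi.single_apply, mul_ite, Finset.sum_ite_eq']

lemma lf_ne_zero {n : ℕ} {v : Fin n → K} (hv : v ≠ 0) : lf v ≠ 0 := by
  intro h
  apply hv
  funext j
  have := congrArg (fun f : (Fin n → K) →ₗ[K] K => f (Pi.single j 1)) h
  simpa [lf_single] using this

/-- The hyperplane `v^⊥` with normal vector `v`. -/
noncomputable def perp {n : ℕ} (v : Fin n → K) : Submodule K (Fin n → K) :=
  LinearMap.ker (lf v)

/-- Build an arrangement from a finite set of nonzero normal vectors. -/
noncomputable def mkArr {n : ℕ} (vs : Finset (Fin n → K)) (h : (0 : Fin n → K) ∉ vs) :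
    Arrangement K n :=
  ⟨vs.image perp, by
    intro H hH
    obtain ⟨v, hv, rfl⟩ := Finset.mem_image.mp hH
    exact ⟨lf v, lf_ne_zero (fun h0 => h (h0 ▸ hv)), rfl⟩⟩

end Arrgt

open Arrgt

instance : Fact (Nat.Prime 11) := ⟨by norm_num⟩

/-- The normal vectors of the arrangement `B` in `𝔽₁₁³`. -/
def Bvecs : List (Fin 3 → ZMod 11) :=
  [![0,0,1], ![0,1,1], ![0,1,2], ![0,1,3], ![0,1,4], ![0,1,5], ![0,1,6],
   ![1,0,0], ![1,0,1], ![1,2,2], ![1,3,1], ![1,3,10], ![1,4,3], ![1,4,4],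
   ![1,5,7], ![1,6,4], ![1,6,6], ![1,8,5], ![1,8,8], ![1,9,0], ![1,9,1],
   ![1,9,4], ![1,9,5], ![1,9,8], ![1,9,9], ![1,10,0], ![1,10,5]]

/-! Two distinct planes of `K³` meet in a line, and a line belongs to the intersection lattice
iff it lies on at least two planes of the arrangement. So for `H ∈ 𝓑` the lines `H ∩ H'` are
the points of `ℙ(H)` lying on another plane, and every invariant in question counts projective
points `u`, normalised to have first nonzero coordinate `1`, by their multiplicity
`#{v ∈ Bvecs | v ⬝ᵥ u = 0}`. Over `𝔽₁₁` these counts are finite computations checked by the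
kernel. -/

namespace Arrgt

section Normalized

variable {K : Type*} [Field K] {n : ℕ}

/-- Canonical representatives of the points of projective space. -/
def IsNormalized (u : Fin n → K) : Prop := ∃ i, u i = 1 ∧ ∀ j < i, u j = 0

instance [DecidableEq K] (u : Fin n → K) : Decidable (IsNormalized u) := by
  unfold IsNormalized
  infer_instance

lemma IsNormalized.ne_zero {u : Fin n → K} (hu : IsNormalized u) : u ≠ 0 := by
  obtain ⟨i, hi, -⟩ := hu
  rintro rfl
  exact zero_ne_one hi

lemma IsNormalized.eq_one_of_smul {u : Fin n → K} {c : K} (hu : IsNormalized u)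
    (hcu : IsNormalized (c • u)) : c = 1 := by
  obtain ⟨i, hi, hlt⟩ := hu
  obtain ⟨i', hi', hlt'⟩ := hcu
  simp only [Pi.smul_apply, smul_eq_mul] at hi' hlt'
  rcases lt_trichotomy i i' with h | rfl | h
  · simp [(by simpa [hi] using hlt' i h : c = 0)] at hi'
  · simpa [hi] using hi'
  · simp [hlt i' h] at hi'

lemma exists_isNormalized_smul {u : Fin n → K} (hu : u ≠ 0) :
    ∃ c : K, IsNormalized (c • u) := by
  obtain ⟨i, hi, hmin⟩ :=
    WellFounded.has_min wellFounded_lt {i | u i ≠ 0} (Function.ne_iff.mp hu)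
  refine ⟨(u i)⁻¹, i, inv_mul_cancel₀ hi, fun j hj => ?_⟩
  have : u j = 0 := by_contra fun h => hmin j h hj
  simp [this]

lemma span_singleton_injOn_isNormalized :
    Set.InjOn (fun u : Fin n → K => K ∙ u) {u | IsNormalized u} := by
  intro u hu w hw h
  obtain ⟨c, rfl⟩ := Submodule.span_singleton_eq_span_singleton.mp h
  rw [Units.smul_def] at hw ⊢
  rw [hu.eq_one_of_smul hw, one_smul]

lemma exists_isNormalized_eq_span_singleton {p : Submodule K (Fin n → K)}
    (hp : finrank K p = 1) : ∃ u, IsNormalized u ∧ p = K ∙ u := by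
  obtain ⟨w, hw, hw0⟩ := p.exists_mem_ne_zero_of_ne_bot (by rintro rfl; simp at hp)
  obtain ⟨c, hcw⟩ := exists_isNormalized_smul hw0
  exact ⟨c • w, hcw,
    eq_span_singleton_of_mem_of_finrank_eq_one hp (p.smul_mem c hw) hcw.ne_zero⟩

variable (K n) in
def projPoints [Fintype K] [DecidableEq K] : Finset (Fin n → K) :=
  Finset.univ.filter IsNormalized

@[simp]
lemma mem_projPoints [Fintype K] [DecidableEq K] {u : Fin n → K} :
    u ∈ projPoints K n ↔ IsNormalized u := by
  simp [projPoints]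

lemma ncard_setOf_finrank_eq_one [Fintype K] [DecidableEq K]
    (Q : Submodule K (Fin n → K) → Prop) [DecidablePred Q] :
    {p : Submodule K (Fin n → K) | finrank K p = 1 ∧ Q p}.ncard =
      ((projPoints K n).filter fun u => Q (K ∙ u)).card := by
  have hlines : {p : Submodule K (Fin n → K) | finrank K p = 1 ∧ Q p} =
      (fun u => K ∙ u) '' ↑((projPoints K n).filter fun u => Q (K ∙ u)) := by
    ext p
    simp only [Set.mem_ofPred_eq, Set.mem_image, Finset.mem_coe, Finset.mem_filter,
      mem_projPoints]
    constructor
    · rintro ⟨hp, hQ⟩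
      obtain ⟨u, hu, rfl⟩ := exists_isNormalized_eq_span_singleton hp
      exact ⟨u, ⟨hu, hQ⟩, rfl⟩
    · rintro ⟨u, ⟨hu, hQ⟩, rfl⟩
      exact ⟨finrank_span_singleton hu.ne_zero, hQ⟩
  rw [hlines, Set.InjOn.ncard_image, Set.ncard_coe_finset]
  exact span_singleton_injOn_isNormalized.mono fun u hu =>
    mem_projPoints.mp (Finset.mem_filter.mp hu).1

end Normalized

section Perp

variable {K : Type*} [Field K] {n : ℕ}

lemma lf_apply (v x : Fin n → K) : lf v x = v ⬝ᵥ x := by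
  simp [lf, dotProduct]

lemma mem_perp {v x : Fin n → K} : x ∈ perp v ↔ v ⬝ᵥ x = 0 := by
  rw [perp, LinearMap.mem_ker, lf_apply]

lemma span_singleton_le_perp_iff {u v : Fin n → K} : K ∙ u ≤ perp v ↔ v ⬝ᵥ u = 0 := by
  rw [Submodule.span_singleton_le_iff_mem, mem_perp]

lemma finrank_perp_add_one {v : Fin n → K} (hv : v ≠ 0) : finrank K (perp v) + 1 = n := by
  rw [perp, Module.Dual.finrank_ker_add_one_of_ne_zero (lf_ne_zero hv), Module.finrank_fin_fun]

lemma perp_injOn_isNormalized : Set.InjOn (perp (K := K) (n := n)) {v | IsNormalized v} := by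
  intro v hv w hw h
  have hker : ⨅ _ : Unit, LinearMap.ker (lf v) ≤ LinearMap.ker (lf w) := by
    simpa [perp] using h.le
  obtain ⟨c, hc⟩ : ∃ c : K, c • lf v = lf w := by
    simpa [Submodule.mem_span_singleton] using mem_span_of_iInf_ker_le_ker hker
  have hwv : w = c • v := funext fun j => by
    simpa [lf_single] using (LinearMap.congr_fun hc (Pi.single j 1)).symm
  subst hwv
  rw [hv.eq_one_of_smul hw, one_smul]

lemma finrank_perp_image {N : Finset (Fin 3 → K)} (hN : ∀ v ∈ N, IsNormalized v) :
    ∀ H ∈ perp '' (N : Set (Fin 3 → K)), finrank K H = 2 := by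
  rintro _ ⟨v, hv, rfl⟩
  have := finrank_perp_add_one (hN v hv).ne_zero
  omega

lemma ncard_sep_perp_image {N : Finset (Fin n → K)} (hN : ∀ v ∈ N, IsNormalized v)
    (R : Submodule K (Fin n → K) → Prop) [DecidablePred R] :
    {H ∈ perp '' (N : Set (Fin n → K)) | R H}.ncard = (N.filter fun v => R (perp v)).card := by
  have himage : {H ∈ perp '' (N : Set (Fin n → K)) | R H} =
      perp '' ↑(N.filter fun v => R (perp v)) := by
    ext H
    simp only [Set.mem_ofPred_eq, Set.mem_image, Finset.mem_coe, Finset.mem_filter]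
    constructor
    · rintro ⟨⟨v, hv, rfl⟩, hR⟩
      exact ⟨v, ⟨hv, hR⟩, rfl⟩
    · rintro ⟨v, ⟨hv, hR⟩, rfl⟩
      exact ⟨⟨v, hv, rfl⟩, hR⟩
  rw [himage, Set.InjOn.ncard_image, Set.ncard_coe_finset]
  exact perp_injOn_isNormalized.mono fun v hv => hN v (Finset.mem_filter.mp hv).1

end Perp

section PlanesInThreeSpace

variable {K V : Type*} [Field K] [AddCommGroup V] [Module K V] [FiniteDimensional K V]

lemma finrank_inf_eq_one (hV : finrank K V = 3) {H H' : Submodule K V}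
    (hH : finrank K H = 2) (hH' : finrank K H' = 2) (hne : H ≠ H') :
    finrank K ↥(H ⊓ H') = 1 := by
  have hlt : H < H ⊔ H' := lt_of_le_of_ne le_sup_left fun h =>
    hne (Submodule.eq_of_le_of_finrank_eq (h ▸ le_sup_right) (by rw [hH, hH'])).symm
  have hsup_gt := Submodule.finrank_lt_finrank_of_lt hlt
  have hsup_le := Submodule.finrank_le (H ⊔ H')
  have := Submodule.finrank_sup_add_finrank_inf_eq H H'
  omega

lemma eq_inf_of_finrank_eq_one (hV : finrank K V = 3) {L H H' : Submodule K V}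
    (hL : finrank K L = 1) (hH : finrank K H = 2) (hH' : finrank K H' = 2) (hne : H ≠ H')
    (hLH : L ≤ H) (hLH' : L ≤ H') : L = H ⊓ H' :=
  Submodule.eq_of_le_of_finrank_eq (le_inf hLH hLH')
    (by rw [hL, finrank_inf_eq_one hV hH hH' hne])

lemma image_inf_eq_setOf (hV : finrank K V = 3) {𝓐 : Set (Submodule K V)}
    (h𝓐 : ∀ H ∈ 𝓐, finrank K H = 2) (hfin : 𝓐.Finite) {H : Submodule K V} (hH : H ∈ 𝓐) :
    (fun H' => H ⊓ H') '' (𝓐 \ {H}) =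
      {L : Submodule K V | finrank K L = 1 ∧ L ≤ H ∧ 1 < {H' ∈ 𝓐 | L ≤ H'}.ncard} := by
  ext L
  simp only [Set.mem_ofPred_eq, Set.one_lt_ncard_iff (hfin.sep _)]
  constructor
  · rintro ⟨H', ⟨hH', hne⟩, rfl⟩
    exact ⟨finrank_inf_eq_one hV (h𝓐 H hH) (h𝓐 H' hH') (Ne.symm hne), inf_le_left,
      H, H', ⟨hH, inf_le_left⟩, ⟨hH', inf_le_right⟩, Ne.symm hne⟩
  · rintro ⟨hL, hLH, H₁, H₂, ⟨h₁, hL₁⟩, ⟨h₂, hL₂⟩, h₁₂⟩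
    obtain ⟨H', hH', hne, hLH'⟩ : ∃ H' ∈ 𝓐, H' ≠ H ∧ L ≤ H' := by
      by_cases h : H₁ = H
      · exact ⟨H₂, h₂, h ▸ h₁₂.symm, hL₂⟩
      · exact ⟨H₁, h₁, h, hL₁⟩
    exact ⟨H', ⟨hH', hne⟩,
      (eq_inf_of_finrank_eq_one hV hL (h𝓐 H hH) (h𝓐 H' hH') hne.symm hLH hLH').symm⟩

end PlanesInThreeSpace

lemma mem_setLattice_iff_one_lt_ncard {K : Type*} [Field K]
    {𝓐 : Set (Submodule K (Fin 3 → K))} (h𝓐 : ∀ H ∈ 𝓐, finrank K H = 2) (hfin : 𝓐.Finite)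
    {p : Submodule K (Fin 3 → K)} (hp : finrank K p = 1) :
    p ∈ setLattice 𝓐 ↔ 1 < {H ∈ 𝓐 | p ≤ H}.ncard := by
  rw [Set.one_lt_ncard_iff (hfin.sep _)]
  constructor
  · rintro ⟨s, hs, rfl⟩
    obtain ⟨H, hH⟩ : s.Nonempty := by
      rw [Finset.nonempty_iff_ne_empty]
      rintro rfl
      rw [Finset.inf_empty, finrank_top, Module.finrank_fin_fun] at hp
      exact absurd hp (by decide)
    by_cases hsingle : ∀ H' ∈ s, H' = H
    · obtain rfl : s = {H} := Finset.eq_singleton_iff_unique_mem.mpr ⟨hH, hsingle⟩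
      rw [Finset.inf_singleton, id, h𝓐 H (hs (Finset.mem_singleton_self H))] at hp
      exact absurd hp (by decide)
    · push Not at hsingle
      obtain ⟨H', hH', hne⟩ := hsingle
      exact ⟨H', H, ⟨hs hH', Finset.inf_le hH'⟩, ⟨hs hH, Finset.inf_le hH⟩, hne⟩
  · rintro ⟨H, H', ⟨hH, hpH⟩, ⟨hH', hpH'⟩, hne⟩
    refine ⟨{H, H'}, by simp [Set.insert_subset_iff, hH, hH'], ?_⟩
    rw [Finset.inf_insert, Finset.inf_singleton]
    exact eq_inf_of_finrank_eq_one (by simp) hp (h𝓐 H hH) (h𝓐 H' hH') hne hpH hpH'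

section Counting

variable {K : Type*} [Field K] [DecidableEq K] {n : ℕ}

def pointMult (N : Finset (Fin n → K)) (u : Fin n → K) : ℕ :=
  (N.filter fun v => v ⬝ᵥ u = 0).card

def restrictionSize [Fintype K] (N : Finset (Fin n → K)) (v : Fin n → K) : ℕ :=
  ((projPoints K n).filter fun u => v ⬝ᵥ u = 0 ∧ 1 < pointMult N u).card

variable {N : Finset (Fin n → K)}

lemma ncard_span_singleton_le_perp_image (hN : ∀ v ∈ N, IsNormalized v) (u : Fin n → K) :
    {H ∈ perp '' (N : Set (Fin n → K)) | K ∙ u ≤ H}.ncard = pointMult N u := by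
  rw [ncard_sep_perp_image hN, pointMult]
  exact congrArg Finset.card (Finset.filter_congr fun v _ => span_singleton_le_perp_iff)

end Counting

section CountingInThreeSpace

variable {K : Type*} [Field K] [Fintype K] [DecidableEq K] {N : Finset (Fin 3 → K)}

lemma ncard_restriction_perp (hN : ∀ v ∈ N, IsNormalized v) {v : Fin 3 → K} (hv : v ∈ N) :
    ((fun H' => perp v ⊓ H') '' (perp '' ↑N \ {perp v})).ncard = restrictionSize N v := by
  rw [image_inf_eq_setOf (Module.finrank_fin_fun K) (finrank_perp_image hN)
    (N.finite_toSet.image _) ⟨v, hv, rfl⟩, ncard_setOf_finrank_eq_one, restrictionSize]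
  refine congrArg Finset.card (Finset.filter_congr fun u _ => ?_)
  rw [span_singleton_le_perp_iff, ncard_span_singleton_le_perp_image hN]

lemma ncard_setOf_ncard_restriction_eq (hN : ∀ v ∈ N, IsNormalized v) (k : ℕ) :
    {H ∈ perp '' (N : Set (Fin 3 → K)) |
      ((fun H' => H ⊓ H') '' (perp '' ↑N \ {H})).ncard = k}.ncard =
      (N.filter fun v => restrictionSize N v = k).card := by
  rw [ncard_sep_perp_image hN]
  exact congrArg Finset.card
    (Finset.filter_congr fun v hv => by rw [ncard_restriction_perp hN hv])

lemma exists_pointMult_of_mem_setLattice (hN : ∀ v ∈ N, IsNormalized v)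
    {p : Submodule K (Fin 3 → K)} (hp : p ∈ setLattice (perp '' (N : Set (Fin 3 → K))))
    (hp1 : finrank K p = 1) :
    ∃ u ∈ projPoints K 3, 1 < pointMult N u ∧
      {H ∈ perp '' (N : Set (Fin 3 → K)) | p ≤ H}.ncard = pointMult N u := by
  obtain ⟨u, hu, rfl⟩ := exists_isNormalized_eq_span_singleton hp1
  rw [mem_setLattice_iff_one_lt_ncard (finrank_perp_image hN) (N.finite_toSet.image _) hp1,
    ncard_span_singleton_le_perp_image hN] at hp
  exact ⟨u, mem_projPoints.mpr hu, hp, ncard_span_singleton_le_perp_image hN u⟩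

lemma ncard_setLattice_pointMult_eq (hN : ∀ v ∈ N, IsNormalized v) {k : ℕ} (hk : 1 < k) :
    {p ∈ setLattice (perp '' (N : Set (Fin 3 → K))) | finrank K p = 1 ∧
      {H ∈ perp '' (N : Set (Fin 3 → K)) | p ≤ H}.ncard = k}.ncard =
      ((projPoints K 3).filter fun u => pointMult N u = k).card := by
  have hlattice : {p ∈ setLattice (perp '' (N : Set (Fin 3 → K))) | finrank K p = 1 ∧
      {H ∈ perp '' (N : Set (Fin 3 → K)) | p ≤ H}.ncard = k} =
      {p : Submodule K (Fin 3 → K) | finrank K p = 1 ∧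
        {H ∈ perp '' (N : Set (Fin 3 → K)) | p ≤ H}.ncard = k} := by
    ext p
    simp only [Set.mem_ofPred_eq, and_iff_right_iff_imp, and_imp]
    rintro hp1 rfl
    exact (mem_setLattice_iff_one_lt_ncard (finrank_perp_image hN) (N.finite_toSet.image _)
      hp1).mpr hk
  rw [hlattice, ncard_setOf_finrank_eq_one]
  exact congrArg Finset.card (Finset.filter_congr fun u _ => by
    rw [ncard_span_singleton_le_perp_image hN])

end CountingInThreeSpace

end Arrgt

lemma Bvecs_toFinset_subset_projPoints : Bvecs.toFinset ⊆ projPoints (ZMod 11) 3 := by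
  decide +kernel

lemma image_pointMult_Bvecs :
    (projPoints (ZMod 11) 3).image (pointMult Bvecs.toFinset) = {1, 2, 3, 7} := by
  decide +kernel

lemma card_pointMult_Bvecs_eq_two :
    ((projPoints (ZMod 11) 3).filter fun u => pointMult Bvecs.toFinset u = 2).card = 15 := by
  decide +kernel

lemma card_pointMult_Bvecs_eq_three :
    ((projPoints (ZMod 11) 3).filter fun u => pointMult Bvecs.toFinset u = 3).card = 70 := by
  decide +kernel

lemma card_pointMult_Bvecs_eq_seven :
    ((projPoints (ZMod 11) 3).filter fun u => pointMult Bvecs.toFinset u = 7).card = 6 := by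
  decide +kernel

lemma image_restrictionSize_Bvecs :
    Bvecs.toFinset.image (restrictionSize Bvecs.toFinset) = {10, 11} := by
  decide +kernel

lemma card_restrictionSize_Bvecs_eq_ten :
    (Bvecs.toFinset.filter fun v => restrictionSize Bvecs.toFinset v = 10).card = 15 := by
  decide +kernel

lemma card_restrictionSize_Bvecs_eq_eleven :
    (Bvecs.toFinset.filter fun v => restrictionSize Bvecs.toFinset v = 11).card = 12 := by
  decide +kernel

/-- The arrangement `B` of 27 hyperplanes in `𝔽₁₁³` has the same lattice invariants as
the complex arrangement `A`: every restriction has 10 or 11 elements (15 hyperplanes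
with 10 and 12 with 11), and the point multiplicities form the multiset
`{{2^15, 3^70, 7^6}}`. -/
theorem B_lattice_invariants
    (𝓑 : Set (Submodule (ZMod 11) (Fin 3 → ZMod 11)))
    (h𝓑 : 𝓑 = perp '' {v | v ∈ Bvecs}) :
    (∀ H ∈ 𝓑, ((fun H' => H ⊓ H') '' (𝓑 \ {H})).ncard ∈ ({10, 11} : Set ℕ)) ∧
      {H ∈ 𝓑 | ((fun H' => H ⊓ H') '' (𝓑 \ {H})).ncard = 10}.ncard = 15 ∧
      {H ∈ 𝓑 | ((fun H' => H ⊓ H') '' (𝓑 \ {H})).ncard = 11}.ncard = 12 ∧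
      (∀ p ∈ setLattice 𝓑, Module.finrank (ZMod 11) p = 1 →
        {H ∈ 𝓑 | p ≤ H}.ncard ∈ ({2, 3, 7} : Set ℕ)) ∧
      {p ∈ setLattice 𝓑 | Module.finrank (ZMod 11) p = 1 ∧
        {H ∈ 𝓑 | p ≤ H}.ncard = 2}.ncard = 15 ∧
      {p ∈ setLattice 𝓑 | Module.finrank (ZMod 11) p = 1 ∧
        {H ∈ 𝓑 | p ≤ H}.ncard = 3}.ncard = 70 ∧
      {p ∈ setLattice 𝓑 | Module.finrank (ZMod 11) p = 1 ∧
        {H ∈ 𝓑 | p ≤ H}.ncard = 7}.ncard = 6 := by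
  have hN : ∀ v ∈ Bvecs.toFinset, IsNormalized v := fun v hv =>
    mem_projPoints.mp (Bvecs_toFinset_subset_projPoints hv)
  rw [← List.coe_toFinset] at h𝓑
  subst h𝓑
  refine ⟨?_, ?_, ?_, ?_, ?_, ?_, ?_⟩
  · rintro _ ⟨v, hv, rfl⟩
    have := Finset.mem_image_of_mem (restrictionSize Bvecs.toFinset) hv
    rw [image_restrictionSize_Bvecs] at this
    rw [ncard_restriction_perp hN hv]
    simpa using this
  · rw [ncard_setOf_ncard_restriction_eq hN, card_restrictionSize_Bvecs_eq_ten]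
  · rw [ncard_setOf_ncard_restriction_eq hN, card_restrictionSize_Bvecs_eq_eleven]
  · intro p hp hp1
    obtain ⟨u, hu, hmult, heq⟩ := exists_pointMult_of_mem_setLattice hN hp hp1
    have := Finset.mem_image_of_mem (pointMult Bvecs.toFinset) hu
    rw [image_pointMult_Bvecs] at this
    simp only [Finset.mem_insert, Finset.mem_singleton] at this
    simp only [heq, Set.mem_insert_iff, Set.mem_singleton_iff]
    omega
  · rw [ncard_setLattice_pointMult_eq hN (by norm_num), card_pointMult_Bvecs_eq_two]
  · rw [ncard_setLattice_pointMult_eq hN (by norm_num), card_pointMult_Bvecs_eq_three]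
  · rw [ncard_setLattice_pointMult_eq hN (by norm_num), card_pointMult_Bvecs_eq_seven]
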